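/- arXiv:math/0401370 — 2 statements merged into one kernel-verified Lean document; each statement's English description precedes it below -/
import Mathlib

section
/- For every β > 2 and all n, m ∈ ℕ with n ≠ m, the series Σ_{k=1}^∞ (β²−4)·k·p_β^k·P̃_{β,n}(√(β²−4)·k)·P̃_{β,m}(√(β²−4)·k) converges absolutely and its sum equals 0; that is, the monic Meixner-type polynomials are orthogonal with respect to the Pascal measure ν̃_β. -/
/-- The monic polynomials of Meixner's type `P̃_{β,n}`, defined by the three-term recurrence
`P̃_{β,0}(s) = 1`, `P̃_{β,1}(s) = s - β`, and
`P̃_{β,n+2}(s) = (s - β(n+2)) P̃_{β,n+1}(s) - (n+1)(n+2) P̃_{β,n}(s)`. -/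
noncomputable def meixnerP (β : ℝ) : ℕ → ℝ → ℝ
  | 0 => fun _ => 1
  | 1 => fun s => s - β
  | n + 2 => fun s =>
      (s - β * (n + 2)) * meixnerP β (n + 1) s - (n + 1) * (n + 2) * meixnerP β n s

/-- `p_β = (β - √(β²-4))/(β + √(β²-4))` for `β > 2`. -/
noncomputable def pPascal (β : ℝ) : ℝ :=
  (β - Real.sqrt (β ^ 2 - 4)) / (β + Real.sqrt (β ^ 2 - 4))



lemma meixnerP_growth_aux (β : ℝ) :
    ∀ n : ℕ, (∃ C : ℝ, 0 ≤ C ∧ ∀ s : ℝ, |meixnerP β n s| ≤ C * (1 + |s|) ^ n) ∧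
      (∃ C : ℝ, 0 ≤ C ∧ ∀ s : ℝ, |meixnerP β (n + 1) s| ≤ C * (1 + |s|) ^ (n + 1)) := by
  intro n
  induction n with
  | zero =>
      constructor
      · exact ⟨1, zero_le_one, fun s => by simp [meixnerP]⟩
      · refine ⟨1 + |β|, by positivity, fun s => ?_⟩
        show |s - β| ≤ _
        have h1 : |s - β| ≤ |s| + |β| := abs_sub _ _
        have h2 : (0:ℝ) ≤ |s| := abs_nonneg s
        have h3 : (0:ℝ) ≤ |β| := abs_nonneg β
        calc |s - β| ≤ |s| + |β| := h1
          _ ≤ (1 + |β|) * (1 + |s|) ^ 1 := by nlinarith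
  | succ k ih =>
      obtain ⟨⟨C0, hC00, hC0⟩, C1, hC10, hC1⟩ := ih
      refine ⟨⟨C1, hC10, hC1⟩, (1 + |β|) * ((k:ℝ) + 2) * C1 + ((k:ℝ) + 1) * ((k:ℝ) + 2) * C0,
        by positivity, fun s => ?_⟩
      have hrec : meixnerP β (k + 2) s =
          (s - β * ((k:ℝ) + 2)) * meixnerP β (k + 1) s
            - ((k:ℝ) + 1) * ((k:ℝ) + 2) * meixnerP β k s := by
        rw [meixnerP]
      have hs : (1:ℝ) ≤ 1 + |s| := by have := abs_nonneg s; linarith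
      have hs0 : (0:ℝ) ≤ 1 + |s| := by linarith
      have h1 : |s - β * ((k:ℝ) + 2)| ≤ (1 + |β|) * ((k:ℝ) + 2) * (1 + |s|) := by
        have h1a : |s - β * ((k:ℝ) + 2)| ≤ |s| + |β| * ((k:ℝ) + 2) := by
          calc |s - β * ((k:ℝ) + 2)| ≤ |s| + |β * ((k:ℝ) + 2)| := abs_sub _ _
            _ = |s| + |β| * ((k:ℝ) + 2) := by
                rw [abs_mul, abs_of_nonneg (by positivity : (0:ℝ) ≤ (k:ℝ) + 2)]
        have hk : (0:ℝ) ≤ (k:ℝ) := Nat.cast_nonneg k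
        have h2 : (0:ℝ) ≤ |s| := abs_nonneg s
        have h3 : (0:ℝ) ≤ |β| := abs_nonneg β
        nlinarith [mul_nonneg hk h2, mul_nonneg h3 h2, mul_nonneg (mul_nonneg h3 hk) h2]
      calc |meixnerP β (k + 2) s|
          ≤ |s - β * ((k:ℝ) + 2)| * |meixnerP β (k + 1) s|
            + ((k:ℝ) + 1) * ((k:ℝ) + 2) * |meixnerP β k s| := by
            rw [hrec]
            calc |(s - β * ((k:ℝ) + 2)) * meixnerP β (k + 1) s
                - ((k:ℝ) + 1) * ((k:ℝ) + 2) * meixnerP β k s|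
                ≤ |(s - β * ((k:ℝ) + 2)) * meixnerP β (k + 1) s|
                  + |((k:ℝ) + 1) * ((k:ℝ) + 2) * meixnerP β k s| := abs_sub _ _
              _ = _ := by
                  rw [abs_mul, abs_mul, abs_mul,
                    abs_of_nonneg (by positivity : (0:ℝ) ≤ (k:ℝ) + 1),
                    abs_of_nonneg (by positivity : (0:ℝ) ≤ (k:ℝ) + 2)]
        _ ≤ ((1 + |β|) * ((k:ℝ) + 2) * (1 + |s|)) * (C1 * (1 + |s|) ^ (k + 1))
            + ((k:ℝ) + 1) * ((k:ℝ) + 2) * (C0 * (1 + |s|) ^ k) := by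
            have b1 := hC1 s
            have b0 := hC0 s
            have hn1 : (0:ℝ) ≤ |meixnerP β (k+1) s| := abs_nonneg _
            have hn0 : (0:ℝ) ≤ |meixnerP β k s| := abs_nonneg _
            have hc1 : (0:ℝ) ≤ |s - β * ((k:ℝ) + 2)| := abs_nonneg _
            have hpk : (0:ℝ) ≤ (1 + |s|) ^ k := by positivity
            have hpk1 : (0:ℝ) ≤ (1 + |s|) ^ (k+1) := by positivity
            have hkk : (0:ℝ) ≤ ((k:ℝ) + 1) * ((k:ℝ) + 2) := by positivity
            nlinarith [mul_le_mul h1 b1 hn1 (by positivity : (0:ℝ) ≤ (1 + |β|) * ((k:ℝ) + 2) * (1 + |s|)),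
              mul_le_mul_of_nonneg_left b0 hkk]
        _ ≤ ((1 + |β|) * ((k:ℝ) + 2) * C1 + ((k:ℝ) + 1) * ((k:ℝ) + 2) * C0) * (1 + |s|) ^ (k + 2) := by
            have hmono : (1 + |s|) ^ k ≤ (1 + |s|) ^ (k + 2) :=
              pow_le_pow_right₀ hs (by omega)
            have : ((1 + |β|) * ((k:ℝ) + 2) * (1 + |s|)) * (C1 * (1 + |s|) ^ (k + 1))
                = (1 + |β|) * ((k:ℝ) + 2) * C1 * (1 + |s|) ^ (k + 2) := by ring
            rw [this]
            have hkk : (0:ℝ) ≤ ((k:ℝ) + 1) * ((k:ℝ) + 2) * C0 := by positivity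
            nlinarith [mul_le_mul_of_nonneg_left hmono hkk]

lemma meixnerP_growth (β : ℝ) (n : ℕ) :
    ∃ C : ℝ, 0 ≤ C ∧ ∀ s : ℝ, |meixnerP β n s| ≤ C * (1 + |s|) ^ n :=
  (meixnerP_growth_aux β n).1

lemma summable_poly_geo {q : ℝ} (h0 : 0 ≤ q) (h1 : q < 1) (M : ℕ) :
    Summable (fun k : ℕ => ((k:ℝ) + 1) ^ M * q ^ (k + 1)) := by
  have h : ‖q‖ < 1 := by rwa [Real.norm_eq_abs, abs_of_nonneg h0]
  have h2 := summable_pow_mul_geometric_of_norm_lt_one M h (R := ℝ)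
  have h3 := (summable_nat_add_iff 1).mpr h2
  refine h3.congr fun k => ?_
  push_cast
  ring

lemma summable_of_poly_bound {f : ℕ → ℝ} {q C : ℝ} (h0 : 0 ≤ q) (h1 : q < 1) (M : ℕ)
    (hf : ∀ k, |f k| ≤ C * (((k:ℝ) + 1) ^ M * q ^ (k + 1))) : Summable f := by
  have h2 := (summable_poly_geo h0 h1 M).mul_left C
  exact Summable.of_abs (h2.of_nonneg_of_le (fun k => abs_nonneg _) hf)

lemma summable_main (β r q : ℝ) (hD : 0 < β ^ 2 - 4) (hr0 : 0 < r)
    (hq0 : 0 ≤ q) (hq1 : q < 1) (n m : ℕ) (g : ℕ → ℝ) (hg : ∀ k, |g k| ≤ 3 * ((k:ℝ) + 1))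
    (a b : ℝ) (ha : |a| ≤ 1) (hb : |b| ≤ 1) :
    Summable (fun k : ℕ => (β ^ 2 - 4) * ((k:ℝ) + 1) * q ^ (k + 1) * g k
      * meixnerP β n (r * ((k:ℝ) + a + 1)) * meixnerP β m (r * ((k:ℝ) + b + 1))) := by
  obtain ⟨Cn, hCn0, hCn⟩ := meixnerP_growth β n
  obtain ⟨Cm, hCm0, hCm⟩ := meixnerP_growth β m
  have h12r : (0:ℝ) ≤ 1 + 2 * r := by linarith
  apply summable_of_poly_bound hq0 hq1 (n + m + 2)
    (C := (β ^ 2 - 4) * 3 * Cn * Cm * (1 + 2 * r) ^ n * (1 + 2 * r) ^ m)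
  intro k
  have hk0 : (0:ℝ) ≤ (k:ℝ) := k.cast_nonneg
  have key : ∀ (j : ℕ) (Cj : ℝ), 0 ≤ Cj → (∀ s : ℝ, |meixnerP β j s| ≤ Cj * (1 + |s|) ^ j) →
      ∀ c : ℝ, |c| ≤ 1 →
      |meixnerP β j (r * ((k:ℝ) + c + 1))| ≤ Cj * ((1 + 2 * r) ^ j * ((k:ℝ) + 1) ^ j) := by
    intro j Cj hCj0 hCj c hc
    refine (hCj _).trans ?_
    have hc' := abs_le.1 hc
    have h2 : |(k:ℝ) + c + 1| ≤ (k:ℝ) + 2 := abs_le.2 ⟨by linarith, by linarith⟩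
    have h1 : |r * ((k:ℝ) + c + 1)| ≤ r * ((k:ℝ) + 2) := by
      rw [abs_mul, abs_of_pos hr0]
      exact mul_le_mul_of_nonneg_left h2 hr0.le
    have h3 : 1 + |r * ((k:ℝ) + c + 1)| ≤ (1 + 2 * r) * ((k:ℝ) + 1) := by
      nlinarith [mul_nonneg hr0.le hk0]
    have h4 : (0:ℝ) ≤ 1 + |r * ((k:ℝ) + c + 1)| := by positivity
    refine le_trans (mul_le_mul_of_nonneg_left (pow_le_pow_left₀ h4 h3 j) hCj0) (le_of_eq ?_)
    rw [mul_pow]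
  have hb1 := key n Cn hCn0 hCn a ha
  have hb2 := key m Cm hCm0 hCm b hb
  have hqp : (0:ℝ) ≤ q ^ (k + 1) := pow_nonneg hq0 _
  have hA0 : (0:ℝ) ≤ (β ^ 2 - 4) * ((k:ℝ) + 1) * q ^ (k + 1) :=
    mul_nonneg (mul_nonneg hD.le (by positivity)) hqp
  have m1 : |g k| * |meixnerP β n (r * ((k:ℝ) + a + 1))| * |meixnerP β m (r * ((k:ℝ) + b + 1))|
      ≤ (3 * ((k:ℝ) + 1)) * (Cn * ((1 + 2 * r) ^ n * ((k:ℝ) + 1) ^ n))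
        * (Cm * ((1 + 2 * r) ^ m * ((k:ℝ) + 1) ^ m)) := by
    refine mul_le_mul (mul_le_mul (hg k) hb1 (abs_nonneg _) (by positivity)) hb2
      (abs_nonneg _) ?_
    have h5 : (0:ℝ) ≤ (1 + 2 * r) ^ n := pow_nonneg h12r n
    positivity
  calc |(β ^ 2 - 4) * ((k:ℝ) + 1) * q ^ (k + 1) * g k
        * meixnerP β n (r * ((k:ℝ) + a + 1)) * meixnerP β m (r * ((k:ℝ) + b + 1))|
      = ((β ^ 2 - 4) * ((k:ℝ) + 1) * q ^ (k + 1))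
        * (|g k| * |meixnerP β n (r * ((k:ℝ) + a + 1))|
            * |meixnerP β m (r * ((k:ℝ) + b + 1))|) := by
        simp only [abs_mul]
        rw [abs_of_pos hD, abs_of_nonneg (by positivity : (0:ℝ) ≤ (k:ℝ) + 1),
          abs_of_nonneg hqp]
        ring
    _ ≤ ((β ^ 2 - 4) * ((k:ℝ) + 1) * q ^ (k + 1))
        * ((3 * ((k:ℝ) + 1)) * (Cn * ((1 + 2 * r) ^ n * ((k:ℝ) + 1) ^ n))
            * (Cm * ((1 + 2 * r) ^ m * ((k:ℝ) + 1) ^ m))) := mul_le_mul_of_nonneg_left m1 hA0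
    _ = (β ^ 2 - 4) * 3 * Cn * Cm * (1 + 2 * r) ^ n * (1 + 2 * r) ^ m
        * (((k:ℝ) + 1) ^ (n + m + 2) * q ^ (k + 1)) := by ring

noncomputable def QM (β r : ℝ) (n : ℕ) (x : ℝ) : ℝ := meixnerP β n (r * (x + 1))

lemma QM_zero (β r x : ℝ) : QM β r 0 x = 1 := rfl

lemma QM_one (β r x : ℝ) : QM β r 1 x = r * (x + 1) - β := rfl

lemma QM_rec (β r : ℝ) (n : ℕ) (x : ℝ) :
    QM β r (n + 1) x =
      (r * (x + 1) - β * ((n : ℝ) + 1)) * QM β r n x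
        - (n : ℝ) * ((n : ℝ) + 1) * QM β r (n - 1) x := by
  cases n with
  | zero => simp [QM, meixnerP]
  | succ k =>
      show meixnerP β (k + 2) (r * (x + 1)) = _
      rw [meixnerP]
      show _ = _ - _ * QM β r k x
      unfold QM
      push_cast
      ring

/-- The difference ("eigenvalue") equation statement. -/
def Estmt (β r q : ℝ) (n : ℕ) : Prop :=
  ∀ x : ℝ, q * (x + 2) * QM β r n (x + 1) - (x + q * (x + 2)) * QM β r n x
      + x * QM β r n (x - 1) = (n : ℝ) * (q - 1) * QM β r n x

/-- The structure relation statement. -/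
def Sstmt (β r q : ℝ) (n : ℕ) : Prop :=
  ∀ x : ℝ, r * (q * (x + 2) * QM β r n (x + 1) - x * QM β r n (x - 1))
      = (q - 1) * (QM β r (n + 1) x - (n : ℝ) * ((n : ℝ) + 1) * QM β r (n - 1) x)

lemma ES (β r q : ℝ) (hr2 : r ^ 2 = β ^ 2 - 4) (hq : q = (β - r) ^ 2 / 4) :
    ∀ n : ℕ, (Estmt β r q n ∧ Sstmt β r q n) ∧ (Estmt β r q (n + 1) ∧ Sstmt β r q (n + 1)) := by
  intro n
  induction n with
  | zero =>
      refine ⟨⟨?_, ?_⟩, ?_, ?_⟩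
      · intro x
        simp only [QM_zero, Nat.cast_zero]
        ring
      · intro x
        simp only [QM_zero, QM_one, Nat.cast_zero, Nat.reduceAdd, Nat.reduceSub]
        linear_combination (r + β) * hq + ((1:ℝ)/4 * r - 1/4 * β) * hr2
      · intro x
        simp only [QM_one, Nat.cast_one, Nat.reduceAdd]
        linear_combination (r + β) * hq + ((1:ℝ)/4 * r - 1/4 * β) * hr2
      · intro x
        have R2 := QM_rec β r 1 x
        simp only [QM_zero, QM_one, Nat.cast_one, Nat.reduceAdd, Nat.reduceSub] at R2 ⊢
        linear_combination (-(q - 1)) * R2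
          + ((4:ℝ) + 3*r^2 + 2*r^2*x + β*r + 2*β*r*x - 2*β^2) * hq
          + ((-1:ℝ) + (3/4:ℝ)*r^2 + (1/2:ℝ)*r^2*x - (5/4:ℝ)*β*r - (1/2:ℝ)*β*r*x
              + (1/2:ℝ)*β^2) * hr2
  | succ k ih =>
      obtain ⟨⟨hE0, hS0⟩, hE1, hS1⟩ := ih
      have hstepE : Estmt β r q (k + 2) := by
        intro x
        have R2p := QM_rec β r (k + 1) (x + 1)
        have R2o := QM_rec β r (k + 1) x
        have R2m := QM_rec β r (k + 1) (x - 1)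
        simp only [Nat.add_sub_cancel] at R2p R2o R2m
        linear_combination (norm := (push_cast; ring1))
          q * (x + 2) * R2p + (-(x + q * (x + 2)) - ((k:ℝ) + 1) * (q - 1)) * R2o
            + x * R2m + (r * (x + 1) - β * ((k:ℝ) + 2)) * hE1 x + hS1 x
            - ((k:ℝ) + 1) * ((k:ℝ) + 2) * hE0 x
      have hstepS : Sstmt β r q (k + 2) := by
        intro x
        have R3o := QM_rec β r (k + 2) x
        have R2p := QM_rec β r (k + 1) (x + 1)
        have R2o := QM_rec β r (k + 1) x
        have R2m := QM_rec β r (k + 1) (x - 1)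
        have R1o := QM_rec β r k x
        simp only [Nat.add_sub_cancel] at R3o R2p R2o R2m
        linear_combination (norm := (push_cast; ring1))
          r * (q * (x + 2)) * R2p - r * x * R2m - (q - 1) * R3o
            + (r * (x + 1) - β * ((k:ℝ) + 2)) * hS1 x + r ^ 2 * hE1 x
            - ((k:ℝ) + 1) * ((k:ℝ) + 2) * hS0 x
            + ((-2:ℝ)*β + (-1/2:ℝ)*β^2*r + (1/2:ℝ)*β^3) * R2o
            + ((-4:ℝ) + (-6:ℝ)*(k:ℝ) + (-2:ℝ)*(k:ℝ)^2 + (-1:ℝ)*β*r + (-3/2:ℝ)*β*r*(k:ℝ)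
                + (-1/2:ℝ)*β*r*(k:ℝ)^2 + β^2 + (3/2:ℝ)*β^2*(k:ℝ) + (1/2:ℝ)*β^2*(k:ℝ)^2) * R1o
            + ((10:ℝ)*(QM β r (k+1) x) + (2:ℝ)*(k:ℝ)*(QM β r (k-1) x)
                + (7:ℝ)*(k:ℝ)*(QM β r (k+1) x) + (5:ℝ)*(k:ℝ)^2*(QM β r (k-1) x)
                + (k:ℝ)^2*(QM β r (k+1) x) + (4:ℝ)*(k:ℝ)^3*(QM β r (k-1) x)
                + (k:ℝ)^4*(QM β r (k-1) x) + (-2:ℝ)*r*(QM β r k x)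
                + (-3:ℝ)*r*(k:ℝ)*(QM β r k x) + (-1:ℝ)*r*(k:ℝ)^2*(QM β r k x)
                + (-2:ℝ)*r*x*(QM β r k x) + (-3:ℝ)*r*x*(k:ℝ)*(QM β r k x)
                + (-1:ℝ)*r*x*(k:ℝ)^2*(QM β r k x) + (3:ℝ)*r^2*(QM β r (k+1) x)
                + r^2*(k:ℝ)*(QM β r (k+1) x) + r^2*x*(QM β r (k+1) x)
                + (4:ℝ)*β*(QM β r k x) + β*(QM β r (k+2) x)
                + (8:ℝ)*β*(k:ℝ)*(QM β r k x) + (5:ℝ)*β*(k:ℝ)^2*(QM β r k x)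
                + β*(k:ℝ)^3*(QM β r k x)) * hq
            + ((-3/2:ℝ)*(QM β r (k+1) x) + (1/2:ℝ)*(k:ℝ)*(QM β r (k-1) x)
                + (-1/4:ℝ)*(k:ℝ)*(QM β r (k+1) x) + (5/4:ℝ)*(k:ℝ)^2*(QM β r (k-1) x)
                + (1/4:ℝ)*(k:ℝ)^2*(QM β r (k+1) x) + (k:ℝ)^3*(QM β r (k-1) x)
                + (1/4:ℝ)*(k:ℝ)^4*(QM β r (k-1) x) + (-1/2:ℝ)*r*(QM β r k x)
                + (-3/4:ℝ)*r*(k:ℝ)*(QM β r k x) + (-1/4:ℝ)*r*(k:ℝ)^2*(QM β r k x)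
                + (-1/2:ℝ)*r*x*(QM β r k x) + (-3/4:ℝ)*r*x*(k:ℝ)*(QM β r k x)
                + (-1/4:ℝ)*r*x*(k:ℝ)^2*(QM β r k x) + (3/4:ℝ)*r^2*(QM β r (k+1) x)
                + (1/4:ℝ)*r^2*(k:ℝ)*(QM β r (k+1) x) + (1/4:ℝ)*r^2*x*(QM β r (k+1) x)
                + β*(QM β r k x) + (1/4:ℝ)*β*(QM β r (k+2) x)
                + (2:ℝ)*β*(k:ℝ)*(QM β r k x) + (5/4:ℝ)*β*(k:ℝ)^2*(QM β r k x)
                + (1/4:ℝ)*β*(k:ℝ)^3*(QM β r k x) + (-3/2:ℝ)*β*r*(QM β r (k+1) x)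
                + (-1/2:ℝ)*β*r*(k:ℝ)*(QM β r (k+1) x) + (-1/2:ℝ)*β*r*x*(QM β r (k+1) x)
                + β^2*(QM β r (k+1) x) + (1/2:ℝ)*β^2*(k:ℝ)*(QM β r (k+1) x)) * hr2
      exact ⟨⟨hE1, hS1⟩, hstepE, hstepS⟩


noncomputable def Fk (β r q : ℝ) (n m : ℕ) (k : ℕ) : ℝ :=
  (β ^ 2 - 4) * ((k:ℝ) + 1) * q ^ (k + 1) * QM β r n (k:ℝ) * QM β r m (k:ℝ)

noncomputable def A1k (β r q : ℝ) (n m : ℕ) (k : ℕ) : ℝ :=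
  (β ^ 2 - 4) * ((k:ℝ) + 1) * q ^ (k + 1) * (q * ((k:ℝ) + 2)) * QM β r n ((k:ℝ) + 1)
    * QM β r m (k:ℝ)

noncomputable def A2k (β r q : ℝ) (n m : ℕ) (k : ℕ) : ℝ :=
  (β ^ 2 - 4) * ((k:ℝ) + 1) * q ^ (k + 1) * ((k:ℝ) + q * ((k:ℝ) + 2)) * QM β r n (k:ℝ)
    * QM β r m (k:ℝ)

noncomputable def A3k (β r q : ℝ) (n m : ℕ) (k : ℕ) : ℝ :=
  (β ^ 2 - 4) * ((k:ℝ) + 1) * q ^ (k + 1) * (k:ℝ) * QM β r n ((k:ℝ) - 1) * QM β r m (k:ℝ)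

section Sums

variable {β r q : ℝ}

lemma sumF (hD : 0 < β ^ 2 - 4) (hr0 : 0 < r) (hq0 : 0 ≤ q) (hq1 : q < 1) (n m : ℕ) : Summable (Fk β r q n m) := by
  refine (summable_main β r q hD hr0 hq0 hq1 n m (fun _ => 1)
    (fun k => by rw [abs_one]; have := Nat.cast_nonneg (α := ℝ) k; linarith)
    0 0 (by norm_num) (by norm_num)).congr fun k => ?_
  show _ = Fk β r q n m k
  unfold Fk QM
  norm_num

lemma sumA1 (hD : 0 < β ^ 2 - 4) (hr0 : 0 < r) (hq0 : 0 ≤ q) (hq1 : q < 1) (n m : ℕ) : Summable (A1k β r q n m) := by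
  refine (summable_main β r q hD hr0 hq0 hq1 n m (fun k => q * ((k:ℝ) + 2))
    (fun k => ?_) 1 0 (by norm_num) (by norm_num)).congr fun k => ?_
  · have hk := Nat.cast_nonneg (α := ℝ) k
    rw [abs_of_nonneg (mul_nonneg hq0 (by positivity : (0:ℝ) ≤ (k:ℝ) + 2))]
    nlinarith [mul_nonneg (sub_nonneg.2 hq1.le) (show (0:ℝ) ≤ (k:ℝ) + 2 by positivity)]
  · show _ = A1k β r q n m k
    unfold A1k QM
    norm_num

lemma sumA2 (hD : 0 < β ^ 2 - 4) (hr0 : 0 < r) (hq0 : 0 ≤ q) (hq1 : q < 1) (n m : ℕ) : Summable (A2k β r q n m) := by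
  refine (summable_main β r q hD hr0 hq0 hq1 n m (fun k => (k:ℝ) + q * ((k:ℝ) + 2))
    (fun k => ?_) 0 0 (by norm_num) (by norm_num)).congr fun k => ?_
  · have hk := Nat.cast_nonneg (α := ℝ) k
    rw [abs_of_nonneg (add_nonneg hk (mul_nonneg hq0 (by positivity : (0:ℝ) ≤ (k:ℝ) + 2)))]
    nlinarith [mul_nonneg (sub_nonneg.2 hq1.le) (show (0:ℝ) ≤ (k:ℝ) + 2 by positivity)]
  · show _ = A2k β r q n m k
    unfold A2k QM
    norm_num

lemma sumA3 (hD : 0 < β ^ 2 - 4) (hr0 : 0 < r) (hq0 : 0 ≤ q) (hq1 : q < 1) (n m : ℕ) : Summable (A3k β r q n m) := by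
  refine (summable_main β r q hD hr0 hq0 hq1 n m (fun k => (k:ℝ))
    (fun k => ?_) (-1) 0 (by norm_num) (by norm_num)).congr fun k => ?_
  · have hk := Nat.cast_nonneg (α := ℝ) k
    rw [abs_of_nonneg hk]; linarith
  · show _ = A3k β r q n m k
    unfold A3k QM
    norm_num

lemma shiftA1 (n m : ℕ) (k : ℕ) : A3k β r q m n (k + 1) = A1k β r q n m k := by
  unfold A1k A3k QM
  push_cast
  rw [show ((k:ℝ) + 1) - 1 = (k:ℝ) by ring]
  ring

lemma sumA1_eq (hD : 0 < β ^ 2 - 4) (hr0 : 0 < r) (hq0 : 0 ≤ q) (hq1 : q < 1) (n m : ℕ) :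
    ∑' k, A1k β r q n m k = ∑' k, A3k β r q m n k := by
  have hs := sumA3 hD hr0 hq0 hq1 m n
  rw [Summable.tsum_eq_zero_add hs]
  have h0 : A3k β r q m n 0 = 0 := by
    unfold A3k
    norm_num
  rw [h0, zero_add]
  exact tsum_congr fun k => (shiftA1 n m k).symm

end Sums

lemma rel_calc (β r q : ℝ) (hD : 0 < β ^ 2 - 4) (hr0 : 0 < r) (hr2 : r ^ 2 = β ^ 2 - 4)
    (hq : q = (β - r) ^ 2 / 4) (hq0 : 0 ≤ q) (hq1 : q < 1) (n m : ℕ) :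
    (n:ℝ) * (q - 1) * ∑' k, Fk β r q n m k
      = ∑' k, A3k β r q m n k - ∑' k, A2k β r q n m k + ∑' k, A3k β r q n m k := by
  have hE : Estmt β r q n := (ES β r q hr2 hq n).1.1
  have hs1 := sumA1 hD hr0 hq0 hq1 (β := β) n m
  have hs2 := sumA2 hD hr0 hq0 hq1 (β := β) n m
  have hs3 := sumA3 hD hr0 hq0 hq1 (β := β) n m
  calc (n:ℝ) * (q - 1) * ∑' k, Fk β r q n m k
      = ∑' k, (n:ℝ) * (q - 1) * Fk β r q n m k := tsum_mul_left.symm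
    _ = ∑' k, (A1k β r q n m k - A2k β r q n m k + A3k β r q n m k) := by
        refine tsum_congr fun k => ?_
        have hEk := hE (k:ℝ)
        unfold Fk A1k A2k A3k
        linear_combination (-((β ^ 2 - 4) * ((k:ℝ) + 1) * q ^ (k + 1) * QM β r m (k:ℝ))) * hEk
    _ = (∑' k, (A1k β r q n m k - A2k β r q n m k)) + ∑' k, A3k β r q n m k :=
        Summable.tsum_add (hs1.sub hs2) hs3
    _ = (∑' k, A1k β r q n m k) - (∑' k, A2k β r q n m k) + ∑' k, A3k β r q n m k := by
        rw [Summable.tsum_sub hs1 hs2]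
    _ = ∑' k, A3k β r q m n k - ∑' k, A2k β r q n m k + ∑' k, A3k β r q n m k := by
        rw [sumA1_eq hD hr0 hq0 hq1]


/-- For `β > 2`, the monic Meixner-type polynomials are orthogonal with respect to the Pascal
measure `ν̃_β = (β²-4) Σ_{k≥1} p_β^k k δ_{√(β²-4) k}`: for `n ≠ m`, the series
`Σ_{k≥1} (β²-4) k p_β^k P̃_{β,n}(√(β²-4) k) P̃_{β,m}(√(β²-4) k)` converges absolutely and
its sum is `0`.  (The index `k : ℕ` below stands for `k + 1 ≥ 1`.) -/
theorem meixnerP_orthogonal_pascal (β : ℝ) (hβ : 2 < β) (n m : ℕ) (hnm : n ≠ m) :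
    Summable (fun k : ℕ =>
      |(β ^ 2 - 4) * (k + 1 : ℕ) * pPascal β ^ (k + 1) *
        meixnerP β n (Real.sqrt (β ^ 2 - 4) * (k + 1 : ℕ)) *
        meixnerP β m (Real.sqrt (β ^ 2 - 4) * (k + 1 : ℕ))|) ∧
    ∑' k : ℕ,
      (β ^ 2 - 4) * (k + 1 : ℕ) * pPascal β ^ (k + 1) *
        meixnerP β n (Real.sqrt (β ^ 2 - 4) * (k + 1 : ℕ)) *
        meixnerP β m (Real.sqrt (β ^ 2 - 4) * (k + 1 : ℕ)) = 0 := by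

  set r : ℝ := Real.sqrt (β ^ 2 - 4) with hrdef
  set q : ℝ := pPascal β with hqdef
  have hD : (0:ℝ) < β ^ 2 - 4 := by nlinarith
  have hr2 : r ^ 2 = β ^ 2 - 4 := Real.sq_sqrt hD.le
  have hr0 : 0 < r := Real.sqrt_pos.2 hD
  have hbr : (β - r) * (β + r) = 4 := by linear_combination (-1:ℝ) * hr2
  have hBR : 0 < β + r := by linarith
  have hq : q = (β - r) ^ 2 / 4 := by
    rw [hqdef]
    show (β - r) / (β + r) = _
    rw [div_eq_div_iff hBR.ne' (by norm_num : (4:ℝ) ≠ 0)]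
    linear_combination (r - β) * hbr
  have hq0 : 0 ≤ q := by rw [hq]; positivity
  have hqd : 0 < β - r := by nlinarith [hbr]
  have hq1 : q < 1 := by rw [hq]; nlinarith [hbr, hr0, hqd]
  -- identification of the summand
  have hfun : ∀ k : ℕ,
      (β ^ 2 - 4) * ((k + 1 : ℕ) : ℝ) * q ^ (k + 1) *
        meixnerP β n (r * ((k + 1 : ℕ) : ℝ)) * meixnerP β m (r * ((k + 1 : ℕ) : ℝ))
      = Fk β r q n m k := by
    intro k
    unfold Fk QM
    push_cast
    ring_nf
  have hsum : Summable (Fk β r q n m) := sumF hD hr0 hq0 hq1 n m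
  have hzero : ∑' k, Fk β r q n m k = 0 := by
    have reln := rel_calc β r q hD hr0 hr2 hq hq0 hq1 n m
    have relm := rel_calc β r q hD hr0 hr2 hq hq0 hq1 m n
    have hFsym : ∑' k, Fk β r q m n k = ∑' k, Fk β r q n m k :=
      tsum_congr fun k => by unfold Fk; ring
    have hA2sym : ∑' k, A2k β r q m n k = ∑' k, A2k β r q n m k :=
      tsum_congr fun k => by unfold A2k; ring
    rw [hFsym, hA2sym] at relm
    have key : ((n:ℝ) - (m:ℝ)) * ((q - 1) * ∑' k, Fk β r q n m k) = 0 := by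
      linear_combination reln - relm
    rcases mul_eq_zero.1 key with h | h
    · exact absurd (sub_eq_zero.1 h) (fun hh => hnm (Nat.cast_injective hh))
    · rcases mul_eq_zero.1 h with h' | h'
      · exact absurd h' (by intro hh; nlinarith)
      · exact h'
  constructor
  · exact ((hsum.congr fun k => (hfun k).symm)).abs
  · rw [tsum_congr hfun, hzero]
end

section
/- For every β > 2 and every n ∈ ℕ, the series Σ_{k=1}^∞ (β²−4)·k·p_β^k·P̃_{β,n}(√(β²−4)·k)² converges and its sum equals n!·(n+1)!; that is, the squared L²(ν̃_β)-norm of the n-th monic Meixner-type polynomial equals n!·(n+1)!. -/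
/-!
Write `β = q + q⁻¹` with `0 < q < 1`, so that `√(β² - 4) = q⁻¹ - q` and `p_β = q²`. Against the
weight `(k + 1) q^(2(k + 1))`, the pairing of `P̃_{β,n}((q⁻¹ - q)(k + 1))` with the rising factorial
`(k + 2) ⋯ (k + r + 1)` is `(r + 1)! · r (r - 1) ⋯ (r - n + 1) · q^(n + 2) / (1 - q²)^(r + 2)`:
the recurrence raises `r` and `n` together, and at `n = 0` it is a negative binomial series.
Its vanishing for `r < n` gives `P̃_n ⟂ P̃_0` for `n ≥ 1`, and for any functional with that
property the three-term recurrence `x P_n = P_{n+1} + b_n P_n + l_n P_{n-1}` forces orthogonality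
and `‖P_n‖² = l_1 ⋯ l_n ‖P_0‖²`. Here `l_n = n (n + 1)` and `(β² - 4) ‖P_0‖² = 1`.
-/

open Finset Nat

namespace ThreeTermRecurrence

variable {α : Type*} {x w : α → ℝ} {P : ℕ → α → ℝ} {b l : ℕ → ℝ}

/- Expand `x P_m P_n` by the recurrence in `m` and in `n`. In `hrec`, `P (n - 1)` is `P 0` at
`n = 0`, so `l 0` merely shifts `b 0`. -/
theorem hasSum_mul_succ_left
    (hrec : ∀ n a, x a * P n a = P (n + 1) a + b n * P n a + l n * P (n - 1) a)
    {m n : ℕ} {t₁ t₂ t₃ t₄ : ℝ}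
    (h₁ : HasSum (fun a => w a * (P m a * P (n + 1) a)) t₁)
    (h₂ : HasSum (fun a => w a * (P m a * P n a)) t₂)
    (h₃ : HasSum (fun a => w a * (P m a * P (n - 1) a)) t₃)
    (h₄ : HasSum (fun a => w a * (P (m - 1) a * P n a)) t₄) :
    HasSum (fun a => w a * (P (m + 1) a * P n a))
      (t₁ + (b n - b m) * t₂ + l n * t₃ - l m * t₄) := by
  refine (((h₁.add (h₂.mul_left (b n - b m))).add (h₃.mul_left (l n))).sub
    (h₄.mul_left (l m))).congr_fun fun a => ?_
  linear_combination w a * (P m a * hrec n a - P n a * hrec m a)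

theorem hasSum_mul_eq_zero_of_lt
    (hrec : ∀ n a, x a * P n a = P (n + 1) a + b n * P n a + l n * P (n - 1) a)
    (horth : ∀ n, 0 < n → HasSum (fun a => w a * (P 0 a * P n a)) 0) {m n : ℕ} (hmn : m < n) :
    HasSum (fun a => w a * (P m a * P n a)) 0 := by
  induction m using Nat.strong_induction_on generalizing n with
  | _ m ih =>
    cases m with
    | zero => exact horth n hmn
    | succ m =>
      simpa using hasSum_mul_succ_left (m := m) (n := n) hrec (ih m (by omega) (by omega))
        (ih m (by omega) (by omega)) (ih m (by omega) (by omega))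
        (ih (m - 1) (by omega) (by omega))

theorem hasSum_mul_self
    (hrec : ∀ n a, x a * P n a = P (n + 1) a + b n * P n a + l n * P (n - 1) a)
    (horth : ∀ n, 0 < n → HasSum (fun a => w a * (P 0 a * P n a)) 0) {c : ℝ}
    (h₀ : HasSum (fun a => w a * (P 0 a * P 0 a)) c) (n : ℕ) :
    HasSum (fun a => w a * (P n a * P n a)) (c * ∏ i ∈ range n, l (i + 1)) := by
  induction n with
  | zero => simpa using h₀
  | succ n ih =>
    have h := hasSum_mul_succ_left (m := n) (n := n + 1) hrec
      (hasSum_mul_eq_zero_of_lt hrec horth (by omega))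
      (hasSum_mul_eq_zero_of_lt hrec horth (by omega)) ih
      (hasSum_mul_eq_zero_of_lt hrec horth (by omega))
    rw [prod_range_succ]
    convert h using 1
    ring

end ThreeTermRecurrence

theorem Nat.cast_descFactorial_succ {S : Type*} [Ring S] (r n : ℕ) :
    (r.descFactorial (n + 1) : S) = r.descFactorial n * ((r : S) - n) := by
  simp only [← descPochhammer_eval_eq_descFactorial, descPochhammer_succ_eval]

theorem Finset.prod_range_add_one_mul_add_two (n : ℕ) :
    ∏ i ∈ range n, (i + 1) * (i + 2) = n ! * (n + 1)! := by
  induction n with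
  | zero => rfl
  | succ n ih => rw [prod_range_succ, ih, factorial_succ (n + 1), factorial_succ n]; ring

theorem hasSum_succ_mul_ascFactorial_mul_geometric {p : ℝ} (hp : ‖p‖ < 1) (r : ℕ) :
    HasSum (fun k : ℕ => ((k : ℝ) + 1) * p ^ (k + 1) * (k + 2).ascFactorial r)
      ((r + 1)! * p / (1 - p) ^ (r + 2)) := by
  have hchoose (k : ℕ) :
      (k + 1) * (k + 2).ascFactorial r = (r + 1)! * (k + (r + 1)).choose (r + 1) := by
    rw [← ascFactorial_eq_factorial_mul_choose, ascFactorial_succ, ← succ_ascFactorial]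
  have h := (hasSum_choose_mul_geometric_of_norm_lt_one (r + 1) hp).mul_left ((r + 1)! * p)
  rw [show (r + 1)! * p * (1 / (1 - p) ^ (r + 1 + 1)) = (r + 1)! * p / (1 - p) ^ (r + 2) by
    ring] at h
  refine h.congr_fun fun k => ?_
  have hchoose' : ((k : ℝ) + 1) * (k + 2).ascFactorial r
      = (r + 1)! * (k + (r + 1)).choose (r + 1) := by
    exact_mod_cast hchoose k
  linear_combination p ^ (k + 1) * hchoose'

theorem meixnerP_rec (β x : ℝ) (n : ℕ) :
    x * meixnerP β n x = meixnerP β (n + 1) x + β * (n + 1) * meixnerP β n x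
      + n * (n + 1) * meixnerP β (n - 1) x := by
  cases n with
  | zero => simp only [meixnerP]; ring
  | succ n => simp only [meixnerP, Nat.add_sub_cancel]; push_cast; ring

noncomputable def pascalMoment (q : ℝ) (r n : ℕ) : ℝ :=
  (r + 1)! * r.descFactorial n * q ^ (n + 2) / (1 - q ^ 2) ^ (r + 2)

section Pascal

variable {q : ℝ}

theorem pascalMoment_succ (hq : q ≠ 0) (hq₁ : 1 - q ^ 2 ≠ 0) (r n : ℕ) :
    pascalMoment q r (n + 1) = (q⁻¹ - q) * pascalMoment q (r + 1) n
      - ((q⁻¹ - q) * (r + 1) + (q + q⁻¹) * (n + 1)) * pascalMoment q r n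
      - n * (n + 1) * pascalMoment q r (n - 1) := by
  unfold pascalMoment
  cases n with
  | zero =>
    simp only [zero_add, descFactorial_zero, descFactorial_one, factorial_succ (r + 1)]
    push_cast
    field_simp
    ring
  | succ n =>
    rw [Nat.add_sub_cancel, Nat.cast_descFactorial_succ, Nat.cast_descFactorial_succ,
      succ_descFactorial_succ, factorial_succ (r + 1)]
    push_cast
    field_simp
    ring

theorem hasSum_ascFactorial_mul_meixnerP (hq₀ : 0 < q) (hq₁ : q < 1) (n r : ℕ) :
    HasSum (fun k : ℕ => ((k : ℝ) + 1) * (q ^ 2) ^ (k + 1) *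
      ((k + 2).ascFactorial r * meixnerP (q + q⁻¹) n ((q⁻¹ - q) * (k + 1))))
      (pascalMoment q r n) := by
  have hq₂ : ‖q ^ 2‖ < 1 := by rw [Real.norm_of_nonneg (by positivity)]; nlinarith
  induction n using Nat.strong_induction_on generalizing r with
  | _ n ih =>
    cases n with
    | zero =>
      simpa [meixnerP, pascalMoment] using hasSum_succ_mul_ascFactorial_mul_geometric hq₂ r
    | succ n =>
      rw [pascalMoment_succ hq₀.ne' (by nlinarith)]
      refine ((((ih n (by omega) (r + 1)).mul_left (q⁻¹ - q)).sub
        ((ih n (by omega) r).mul_left _)).sub ((ih (n - 1) (by omega) r).mul_left _)).congr_fun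
          fun k => ?_
      have hrec := meixnerP_rec (q + q⁻¹) ((q⁻¹ - q) * (k + 1)) n
      rw [ascFactorial_succ]
      push_cast
      linear_combination (-(((k : ℝ) + 1) * (q ^ 2) ^ (k + 1) * (k + 2).ascFactorial r)) * hrec

theorem hasSum_pascal_meixnerP_sq (hq₀ : 0 < q) (hq₁ : q < 1) (n : ℕ) :
    HasSum (fun k : ℕ => ((q + q⁻¹) ^ 2 - 4) * ((k : ℝ) + 1) * (q ^ 2) ^ (k + 1) *
      meixnerP (q + q⁻¹) n ((q⁻¹ - q) * (k + 1)) ^ 2) ((n ! : ℝ) * (n + 1)!) := by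
  set P : ℕ → ℕ → ℝ := fun n k => meixnerP (q + q⁻¹) n ((q⁻¹ - q) * (k + 1))
  have hpair (n : ℕ) : HasSum (fun k : ℕ => ((k : ℝ) + 1) * (q ^ 2) ^ (k + 1) * (P 0 k * P n k))
      (pascalMoment q 0 n) := by
    simpa [P, meixnerP] using hasSum_ascFactorial_mul_meixnerP hq₀ hq₁ n 0
  have horth (n : ℕ) (hn : 0 < n) :
      HasSum (fun k : ℕ => ((k : ℝ) + 1) * (q ^ 2) ^ (k + 1) * (P 0 k * P n k)) 0 := by
    obtain ⟨m, rfl⟩ := Nat.exists_eq_add_one_of_ne_zero hn.ne'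
    simpa [pascalMoment, zero_descFactorial_succ] using hpair (m + 1)
  have hnorm := ThreeTermRecurrence.hasSum_mul_self (fun n k => meixnerP_rec _ _ n) horth
    (hpair 0) n
  have hprod : ∏ i ∈ range n, ((i + 1 : ℕ) : ℝ) * ((i + 1 : ℕ) + 1) = n ! * (n + 1)! := by
    exact_mod_cast prod_range_add_one_mul_add_two n
  have hval : ((q + q⁻¹) ^ 2 - 4) * pascalMoment q 0 0 = 1 := by
    have : 1 - q ^ 2 ≠ 0 := by nlinarith
    simp only [pascalMoment]
    field_simp
    ring
  have h := (hnorm.mul_left ((q + q⁻¹) ^ 2 - 4)).congr_fun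
    (g := fun k : ℕ => ((q + q⁻¹) ^ 2 - 4) * ((k : ℝ) + 1) * (q ^ 2) ^ (k + 1) *
      meixnerP (q + q⁻¹) n ((q⁻¹ - q) * (k + 1)) ^ 2) fun k => by ring
  rwa [← mul_assoc, hval, one_mul, hprod] at h

theorem sqrt_add_inv_sq_sub_four (hq₀ : 0 < q) (hq₁ : q ≤ 1) :
    √((q + q⁻¹) ^ 2 - 4) = q⁻¹ - q := by
  rw [← Real.sqrt_sq (sub_nonneg.2 (hq₁.trans ((one_le_inv₀ hq₀).2 hq₁)))]
  congr 1
  field_simp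
  ring

theorem pPascal_add_inv (hq₀ : 0 < q) (hq₁ : q ≤ 1) : pPascal (q + q⁻¹) = q ^ 2 := by
  rw [pPascal, sqrt_add_inv_sq_sub_four hq₀ hq₁]
  field_simp
  ring

end Pascal

theorem exists_add_inv_eq_of_two_lt {β : ℝ} (hβ : 2 < β) :
    ∃ q : ℝ, 0 < q ∧ q < 1 ∧ q + q⁻¹ = β := by
  set s := √(β ^ 2 - 4)
  have hs : s ^ 2 = β ^ 2 - 4 := Real.sq_sqrt (by nlinarith)
  have hsβ : s < β := by nlinarith [Real.sqrt_nonneg (β ^ 2 - 4)]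
  have hne : β - s ≠ 0 := by linarith
  refine ⟨(β - s) / 2, by linarith, by nlinarith [Real.sqrt_nonneg (β ^ 2 - 4)], ?_⟩
  field_simp
  linear_combination hs

/-- For `β > 2`, the squared `L²(ν̃_β)`-norm of the `n`-th monic Meixner-type polynomial with
respect to the Pascal measure `ν̃_β = (β²-4) Σ_{k≥1} p_β^k k δ_{√(β²-4) k}` equals `n! (n+1)!`:
the series `Σ_{k≥1} (β²-4) k p_β^k P̃_{β,n}(√(β²-4) k)²` converges and its sum is `n! (n+1)!`.
(The index `k : ℕ` below stands for `k + 1 ≥ 1`.) -/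
theorem meixnerP_norm_pascal (β : ℝ) (hβ : 2 < β) (n : ℕ) :
    Summable (fun k : ℕ =>
      (β ^ 2 - 4) * (k + 1 : ℕ) * pPascal β ^ (k + 1) *
        meixnerP β n (Real.sqrt (β ^ 2 - 4) * (k + 1 : ℕ)) ^ 2) ∧
    ∑' k : ℕ,
      (β ^ 2 - 4) * (k + 1 : ℕ) * pPascal β ^ (k + 1) *
        meixnerP β n (Real.sqrt (β ^ 2 - 4) * (k + 1 : ℕ)) ^ 2 =
      (n.factorial : ℝ) * ((n + 1).factorial : ℝ) := by
  obtain ⟨q, hq₀, hq₁, rfl⟩ := exists_add_inv_eq_of_two_lt hβ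
  have h := hasSum_pascal_meixnerP_sq hq₀ hq₁ n
  rw [sqrt_add_inv_sq_sub_four hq₀ hq₁.le, pPascal_add_inv hq₀ hq₁.le]
  push_cast
  exact ⟨h.summable, h.tsum_eq⟩
end
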